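/- Merging lemma for abduction: Let ⟨H, M, T⟩ be given where variable x does not occur in H or M, and x⁺, x⁻, q are fresh variables occurring in none of H, M, T. Define H' = H ∪ {x⁺, x⁻}, M' = M ∪ {q}, and T' = T ∪ {x⁺ → q, x⁻ → q, x⁺ → x, x⁻ → ¬x, ¬x⁺ ∨ ¬x⁻}. Then the explanations of ⟨H', M', T'⟩ are exactly the sets S ∪ {x⁺} where S is an explanation of ⟨H, M, T|_{x=true}⟩, together with the sets S ∪ {x⁻} where S is an explanation of ⟨H, M, T|_{x=false}⟩. -/
import Mathlib


/-- Propositional formulas over variables indexed by `Nat`. -/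
inductive Fm where
  | var : Nat → Fm
  | tru : Fm
  | fls : Fm
  | neg : Fm → Fm
  | conj : Fm → Fm → Fm
  | disj : Fm → Fm → Fm
deriving DecidableEq

/-- Evaluation of a formula under an assignment. -/
def Fm.eval (σ : Nat → Bool) : Fm → Bool
  | .var n => σ n
  | .tru => true
  | .fls => false
  | .neg F => !(F.eval σ)
  | .conj F G => F.eval σ && G.eval σ
  | .disj F G => F.eval σ || G.eval σ

/-- `F.subst x v` replaces every occurrence of variable `x` by the constant `v`. -/
def Fm.subst (x : Nat) (v : Bool) : Fm → Fm
  | .var n => if n = x then (if v then .tru else .fls) else .var n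
  | .tru => .tru
  | .fls => .fls
  | .neg F => .neg (F.subst x v)
  | .conj F G => .conj (F.subst x v) (G.subst x v)
  | .disj F G => .disj (F.subst x v) (G.subst x v)

/-- `F.occurs x` : variable `x` occurs in `F`. -/
def Fm.occurs (x : Nat) : Fm → Prop
  | .var n => n = x
  | .tru => False
  | .fls => False
  | .neg F => F.occurs x
  | .conj F G => F.occurs x ∨ G.occurs x
  | .disj F G => F.occurs x ∨ G.occurs x

/-- `σ` satisfies the set of variables `S` (as positive unit assumptions)
together with the theory `T`. -/
def SatSet (σ : Nat → Bool) (S : Set Nat) (T : Set Fm) : Prop :=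
  (∀ n ∈ S, σ n = true) ∧ (∀ f ∈ T, f.eval σ = true)

/-- `S` is an explanation of the abduction instance `⟨H, M, T⟩`:
`S ⊆ H`, `S ∪ T` is consistent, and `S ∪ T` entails every manifestation in `M`. -/
def IsExplanation (H M : Set Nat) (T : Set Fm) (S : Set Nat) : Prop :=
  S ⊆ H ∧ (∃ σ, SatSet σ S T) ∧ (∀ σ, SatSet σ S T → ∀ m ∈ M, σ m = true)

/-- Material implication as a formula. -/
def Fm.impl (f g : Fm) : Fm := .disj (.neg f) g

/-- The merged hypotheses `H' = H ∪ {x⁺, x⁻}`. -/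
def mergedH (H : Set Nat) (xp xm : Nat) : Set Nat := H ∪ {xp, xm}

/-- The merged manifestations `M' = M ∪ {q}`. -/
def mergedM (M : Set Nat) (q : Nat) : Set Nat := M ∪ {q}

/-- The merged theory
`T' = T ∪ {x⁺ → q, x⁻ → q, x⁺ → x, x⁻ → ¬x, ¬x⁺ ∨ ¬x⁻}`. -/
def mergedT (T : Set Fm) (x xp xm q : Nat) : Set Fm :=
  T ∪ {Fm.impl (.var xp) (.var q), Fm.impl (.var xm) (.var q),
       Fm.impl (.var xp) (.var x), Fm.impl (.var xm) (.neg (.var x)),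
       .disj (.neg (.var xp)) (.neg (.var xm))}


lemma Fm.eval_congr {f : Fm} {σ τ : Nat → Bool} (h : ∀ n, f.occurs n → σ n = τ n) :
    f.eval σ = f.eval τ := by
  induction f with
  | var n => exact h n rfl
  | tru => rfl
  | fls => rfl
  | neg F ih => simp only [Fm.eval]; rw [ih h]
  | conj F G ihF ihG =>
      simp only [Fm.eval]
      rw [ihF fun n hn => h n (Or.inl hn), ihG fun n hn => h n (Or.inr hn)]
  | disj F G ihF ihG =>
      simp only [Fm.eval]
      rw [ihF fun n hn => h n (Or.inl hn), ihG fun n hn => h n (Or.inr hn)]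

lemma subst_eval (f : Fm) (x : Nat) (v : Bool) (σ : Nat → Bool) :
    (f.subst x v).eval σ = f.eval (fun n => if n = x then v else σ n) := by
  induction f with
  | var n =>
      by_cases h : n = x
      · subst h; cases v <;> simp [Fm.subst, Fm.eval]
      · simp [Fm.subst, Fm.eval, h]
  | tru => rfl
  | fls => rfl
  | neg F ih => simp [Fm.subst, Fm.eval, ih]
  | conj F G ihF ihG => simp [Fm.subst, Fm.eval, ihF, ihG]
  | disj F G ihF ihG => simp [Fm.subst, Fm.eval, ihF, ihG]

lemma occurs_subst {f : Fm} {x : Nat} {v : Bool} {n : Nat}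
    (h : (f.subst x v).occurs n) : f.occurs n := by
  induction f with
  | var m =>
      by_cases hm : m = x
      · subst hm; cases v <;> simp [Fm.subst, Fm.occurs] at h
      · simpa [Fm.subst, Fm.occurs, hm] using h
  | tru => simp [Fm.subst, Fm.occurs] at h
  | fls => simp [Fm.subst, Fm.occurs] at h
  | neg F ih => exact ih h
  | conj F G ihF ihG =>
      simp only [Fm.subst, Fm.occurs] at h ⊢
      exact h.imp ihF ihG
  | disj F G ihF ihG =>
      simp only [Fm.subst, Fm.occurs] at h ⊢
      exact h.imp ihF ihG

lemma not_occurs_subst_self (f : Fm) (x : Nat) (v : Bool) :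
    ¬ (f.subst x v).occurs x := by
  induction f with
  | var m =>
      by_cases hm : m = x
      · subst hm; cases v <;> simp [Fm.subst, Fm.occurs]
      · simp [Fm.subst, Fm.occurs, hm]
  | tru => simp [Fm.subst, Fm.occurs]
  | fls => simp [Fm.subst, Fm.occurs]
  | neg F ih => exact ih
  | conj F G ihF ihG =>
      simp only [Fm.subst, Fm.occurs]
      rintro (h | h) <;> [exact ihF h; exact ihG h]
  | disj F G ihF ihG =>
      simp only [Fm.subst, Fm.occurs]
      rintro (h | h) <;> [exact ihF h; exact ihG h]


lemma proj_gen (v : Bool) (x y xp xm q : Nat) (T : Set Fm) (σ : Nat → Bool)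
    (hσ : ∀ f ∈ mergedT T x xp xm q, f.eval σ = true)
    (hy : σ y = true)
    (himp : Fm.impl (.var y) (.var q) ∈ mergedT T x xp xm q)
    (hlit : (if v then Fm.impl (.var y) (.var x)
             else Fm.impl (.var y) (.neg (.var x))) ∈ mergedT T x xp xm q) :
    σ x = v ∧ σ q = true ∧ ∀ f ∈ T, (f.subst x v).eval σ = true := by
  have hx : σ x = v := by
    have := hσ _ hlit
    cases v <;> simpa [Fm.impl, Fm.eval, hy] using this
  have hq : σ q = true := by
    have := hσ _ himp
    simpa [Fm.impl, Fm.eval, hy] using this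
  refine ⟨hx, hq, fun f hf => ?_⟩
  rw [subst_eval]
  have heq : (fun n => if n = x then v else σ n) = σ := by
    funext n
    by_cases h : n = x
    · subst h; simp [hx]
    · simp [h]
  rw [heq]
  exact hσ f (Or.inl hf)

lemma lift_gen (v : Bool) (x xp xm q : Nat) (H : Set Nat) (T : Set Fm)
    (x_xp : x ≠ xp) (x_xm : x ≠ xm) (x_q : x ≠ q) (xp_xm : xp ≠ xm)
    (xp_q : xp ≠ q) (xm_q : xm ≠ q)
    (hxH : x ∉ H) (hxpH : xp ∉ H) (hxmH : xm ∉ H) (hqH : q ∉ H)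
    (hxpT : ∀ f ∈ T, ¬ f.occurs xp) (hxmT : ∀ f ∈ T, ¬ f.occurs xm)
    (hqT : ∀ f ∈ T, ¬ f.occurs q)
    (S₀ : Set Nat) (hS₀H : S₀ ⊆ H) (τ : Nat → Bool)
    (hτ : SatSet τ S₀ ((Fm.subst x v) '' T)) :
    SatSet (fun n => if n = x then v else if n = xp then v
        else if n = xm then !v else if n = q then true else τ n)
      (S₀ ∪ {if v then xp else xm}) (mergedT T x xp xm q) := by
  set τ' := fun n => if n = x then v else if n = xp then v
      else if n = xm then !v else if n = q then true else τ n with hτ'def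
  have hval : ∀ n, n ≠ x → n ≠ xp → n ≠ xm → n ≠ q → τ' n = τ n := by
    intro n h1 h2 h3 h4; simp [τ', h1, h2, h3, h4]
  constructor
  · intro n hn
    rcases hn with hn | hn
    · have hnH := hS₀H hn
      have h1 : n ≠ x := fun h => hxH (h ▸ hnH)
      have h2 : n ≠ xp := fun h => hxpH (h ▸ hnH)
      have h3 : n ≠ xm := fun h => hxmH (h ▸ hnH)
      have h4 : n ≠ q := fun h => hqH (h ▸ hnH)
      rw [hval n h1 h2 h3 h4]
      exact hτ.1 n hn
    · simp only [Set.mem_singleton_iff] at hn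
      subst hn
      cases v <;>
        simp [τ', Ne.symm x_xp, Ne.symm x_xm, Ne.symm xp_xm, xp_xm]
  · intro f hf
    rcases hf with hf | hf
    · have hsubT : (f.subst x v).eval τ = true := hτ.2 _ ⟨f, hf, rfl⟩
      have hx' : τ' x = v := by simp [τ']
      have hagree : (f.subst x v).eval τ' = (f.subst x v).eval τ := by
        apply Fm.eval_congr
        intro n hn
        have h1 : n ≠ x := fun h => not_occurs_subst_self f x v (h ▸ hn)
        have h2 : n ≠ xp := fun h => hxpT f hf (occurs_subst (h ▸ hn))
        have h3 : n ≠ xm := fun h => hxmT f hf (occurs_subst (h ▸ hn))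
        have h4 : n ≠ q := fun h => hqT f hf (occurs_subst (h ▸ hn))
        exact hval n h1 h2 h3 h4
      have heq : (fun n => if n = x then v else τ' n) = τ' := by
        funext n
        by_cases h : n = x
        · subst h; simp [hx']
        · simp [h]
      calc f.eval τ' = (f.subst x v).eval τ' := by rw [subst_eval, heq]
        _ = true := by rw [hagree, hsubT]
    · simp only [Set.mem_insert_iff, Set.mem_singleton_iff] at hf
      rcases hf with rfl | rfl | rfl | rfl | rfl <;> cases v <;>
        simp [Fm.impl, Fm.eval, τ', Ne.symm x_xp, Ne.symm x_xm, Ne.symm x_q,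
          Ne.symm xp_xm, Ne.symm xp_q, Ne.symm xm_q, xp_xm, xp_q, xm_q]

/-- merging lemma for abduction: the explanations of the merged
instance are exactly the explanations of the two substituted instances, with
`x⁺` (resp. `x⁻`) added to each. -/
theorem abduction_merging_lemma (x xp xm q : Nat) (H M : Set Nat) (T : Set Fm)
    (hdist : x ≠ xp ∧ x ≠ xm ∧ x ≠ q ∧ xp ≠ xm ∧ xp ≠ q ∧ xm ≠ q)
    (hxH : x ∉ H) (hxM : x ∉ M)
    (hxpF : xp ∉ H ∧ xp ∉ M ∧ ∀ f ∈ T, ¬ f.occurs xp)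
    (hxmF : xm ∉ H ∧ xm ∉ M ∧ ∀ f ∈ T, ¬ f.occurs xm)
    (hqF : q ∉ H ∧ q ∉ M ∧ ∀ f ∈ T, ¬ f.occurs q) :
    ∀ S, IsExplanation (mergedH H xp xm) (mergedM M q) (mergedT T x xp xm q) S ↔
      ((∃ S₀, IsExplanation H M ((Fm.subst x true) '' T) S₀ ∧ S = S₀ ∪ {xp}) ∨
       (∃ S₀, IsExplanation H M ((Fm.subst x false) '' T) S₀ ∧ S = S₀ ∪ {xm})) := by
  obtain ⟨x_xp, x_xm, x_q, xp_xm, xp_q, xm_q⟩ := hdist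
  obtain ⟨hxpH, hxpM, hxpT⟩ := hxpF
  obtain ⟨hxmH, hxmM, hxmT⟩ := hxmF
  obtain ⟨hqH, hqM, hqT⟩ := hqF
  have hliftT := lift_gen true x xp xm q H T x_xp x_xm x_q xp_xm xp_q xm_q
    hxH hxpH hxmH hqH hxpT hxmT hqT
  have hliftF := lift_gen false x xp xm q H T x_xp x_xm x_q xp_xm xp_q xm_q
    hxH hxpH hxmH hqH hxpT hxmT hqT
  intro S
  constructor
  · rintro ⟨hSH, ⟨σ, hσS, hσT⟩, hent⟩
    have hqS : q ∉ S := by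
      intro h
      rcases hSH h with h' | h'
      · exact hqH h'
      · simp only [Set.mem_insert_iff, Set.mem_singleton_iff] at h'
        rcases h' with rfl | rfl
        · exact xp_q rfl
        · exact xm_q rfl
    have key : xp ∈ S ∨ xm ∈ S := by
      by_contra hc
      push_neg at hc
      obtain ⟨hxpS, hxmS⟩ := hc
      set σ' := fun n => if n = xp then false else if n = xm then false
        else if n = q then false else σ n with hσ'def
      have hσ'S : ∀ n ∈ S, σ' n = true := by
        intro n hn
        have h1 : n ≠ xp := fun h => hxpS (h ▸ hn)
        have h2 : n ≠ xm := fun h => hxmS (h ▸ hn)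
        have h3 : n ≠ q := fun h => hqS (h ▸ hn)
        simp only [σ', if_neg h1, if_neg h2, if_neg h3]
        exact hσS n hn
      have hσ'T : ∀ f ∈ mergedT T x xp xm q, f.eval σ' = true := by
        intro f hf
        rcases hf with hf | hf
        · rw [Fm.eval_congr (τ := σ)]
          · exact hσT f (Or.inl hf)
          · intro n hn
            have h1 : n ≠ xp := fun h => hxpT f hf (h ▸ hn)
            have h2 : n ≠ xm := fun h => hxmT f hf (h ▸ hn)
            have h3 : n ≠ q := fun h => hqT f hf (h ▸ hn)
            simp [σ', h1, h2, h3]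
        · simp only [Set.mem_insert_iff, Set.mem_singleton_iff] at hf
          rcases hf with rfl | rfl | rfl | rfl | rfl <;>
            simp [Fm.impl, Fm.eval, σ', Ne.symm xp_xm]
      have := hent σ' ⟨hσ'S, hσ'T⟩ q (Or.inr rfl)
      simp [σ', Ne.symm xp_q, Ne.symm xm_q] at this
    have hnotboth : ¬(xp ∈ S ∧ xm ∈ S) := by
      rintro ⟨h1, h2⟩
      have hp := hσS xp h1
      have hm := hσS xm h2
      have := hσT (.disj (.neg (.var xp)) (.neg (.var xm)))
        (by simp [mergedT])
      simp [Fm.eval, hp, hm] at this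
    rcases key with hxpS | hxmS
    · left
      have hxmS : xm ∉ S := fun h => hnotboth ⟨hxpS, h⟩
      have hSeq : S \ {xp} ∪ {xp} = S := by
        rw [Set.diff_union_self]
        exact Set.union_eq_self_of_subset_right (Set.singleton_subset_iff.mpr hxpS)
      have hsub : S \ {xp} ⊆ H := by
        rintro n ⟨hnS, hnxp⟩
        simp only [Set.mem_singleton_iff] at hnxp
        rcases hSH hnS with h | h
        · exact h
        · simp only [Set.mem_insert_iff, Set.mem_singleton_iff] at h
          rcases h with rfl | rfl
          · exact absurd rfl hnxp
          · exact absurd hnS hxmS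
      obtain ⟨hx, hq, hT⟩ := proj_gen true x xp xp xm q T σ hσT (hσS xp hxpS)
        (by simp [mergedT]) (by simp [mergedT])
      refine ⟨S \ {xp}, ⟨hsub, ⟨σ, fun n hn => hσS n hn.1,
        by rintro g ⟨f, hf, rfl⟩; exact hT f hf⟩, ?_⟩, hSeq.symm⟩
      intro τ hτ m hm
      have hlift := hliftT (S \ {xp}) hsub τ hτ
      rw [show (if true then xp else xm) = xp from rfl, hSeq] at hlift
      have hM := hent _ hlift m (Or.inl hm)
      have h1 : m ≠ x := fun h => hxM (h ▸ hm)
      have h2 : m ≠ xp := fun h => hxpM (h ▸ hm)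
      have h3 : m ≠ xm := fun h => hxmM (h ▸ hm)
      have h4 : m ≠ q := fun h => hqM (h ▸ hm)
      simpa [h1, h2, h3, h4] using hM
    · right
      have hxpS : xp ∉ S := fun h => hnotboth ⟨h, hxmS⟩
      have hSeq : S \ {xm} ∪ {xm} = S := by
        rw [Set.diff_union_self]
        exact Set.union_eq_self_of_subset_right (Set.singleton_subset_iff.mpr hxmS)
      have hsub : S \ {xm} ⊆ H := by
        rintro n ⟨hnS, hnxm⟩
        simp only [Set.mem_singleton_iff] at hnxm
        rcases hSH hnS with h | h
        · exact h
        · simp only [Set.mem_insert_iff, Set.mem_singleton_iff] at h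
          rcases h with rfl | rfl
          · exact absurd hnS hxpS
          · exact absurd rfl hnxm
      obtain ⟨hx, hq, hT⟩ := proj_gen false x xm xp xm q T σ hσT (hσS xm hxmS)
        (by simp [mergedT]) (by simp [mergedT])
      refine ⟨S \ {xm}, ⟨hsub, ⟨σ, fun n hn => hσS n hn.1,
        by rintro g ⟨f, hf, rfl⟩; exact hT f hf⟩, ?_⟩, hSeq.symm⟩
      intro τ hτ m hm
      have hlift := hliftF (S \ {xm}) hsub τ hτ
      rw [show (if false then xp else xm) = xm from rfl, hSeq] at hlift
      have hM := hent _ hlift m (Or.inl hm)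
      have h1 : m ≠ x := fun h => hxM (h ▸ hm)
      have h2 : m ≠ xp := fun h => hxpM (h ▸ hm)
      have h3 : m ≠ xm := fun h => hxmM (h ▸ hm)
      have h4 : m ≠ q := fun h => hqM (h ▸ hm)
      simpa [h1, h2, h3, h4] using hM
  · rintro (⟨S₀, ⟨hS₀H, ⟨σ, hσ⟩, hent₀⟩, rfl⟩ | ⟨S₀, ⟨hS₀H, ⟨σ, hσ⟩, hent₀⟩, rfl⟩)
    · refine ⟨?_, ⟨_, by simpa using hliftT S₀ hS₀H σ hσ⟩, ?_⟩
      · rintro n (hn | hn)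
        · exact Or.inl (hS₀H hn)
        · simp only [Set.mem_singleton_iff] at hn
          subst hn
          exact Or.inr (Set.mem_insert _ _)
      · intro τ hτ m hm
        have hxp : τ xp = true := hτ.1 xp (Or.inr rfl)
        obtain ⟨hx, hq, hT⟩ := proj_gen true x xp xp xm q T τ hτ.2 hxp
          (by simp [mergedT]) (by simp [mergedT])
        rcases hm with hm | hm
        · exact hent₀ τ ⟨fun n hn => hτ.1 n (Or.inl hn),
            by rintro g ⟨f, hf, rfl⟩; exact hT f hf⟩ m hm
        · simp only [Set.mem_singleton_iff] at hm
          subst hm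
          exact hq
    · refine ⟨?_, ⟨_, by simpa using hliftF S₀ hS₀H σ hσ⟩, ?_⟩
      · rintro n (hn | hn)
        · exact Or.inl (hS₀H hn)
        · simp only [Set.mem_singleton_iff] at hn
          subst hn
          exact Or.inr (Set.mem_insert_of_mem _ rfl)
      · intro τ hτ m hm
        have hxm : τ xm = true := hτ.1 xm (Or.inr rfl)
        obtain ⟨hx, hq, hT⟩ := proj_gen false x xm xp xm q T τ hτ.2 hxm
          (by simp [mergedT]) (by simp [mergedT])
        rcases hm with hm | hm
        · exact hent₀ τ ⟨fun n hn => hτ.1 n (Or.inl hn),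
            by rintro g ⟨f, hf, rfl⟩; exact hT f hf⟩ m hm
        · simp only [Set.mem_singleton_iff] at hm
          subst hm
          exact hq
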